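/- Let $K$ be a compact subset of $\mathbb{R}_{>0}$ and let $a \in \mathbb{R}_{>0}^M$, $b \in \mathbb{R}_{>0}^N$ be fixed vectors with strictly positive entries, where $M, N \geq 2$. Define $f_{ij} = x_i y_j - a_i b_j$. Then there exist constants $c_1, c_2 > 0$ such that for all $x \in K^M$ and $y \in K^N$, $c_1 \Big( \sum_{i=2}^{M} f_{i1}^2 + \sum_{j=2}^{N} f_{1j}^2 + f_{11}^2 \Big) \;\leq\; \| x y^T - a b^T \|^2 \;\leq\; c_2 \Big( \sum_{i=2}^{M} f_{i1}^2 + \sum_{j=2}^{N} f_{1j}^2 + f_{11}^2 \Big),$ where $\| x y^T - a b^T \|^2 = \sum_{i=1}^{M} \sum_{j=1}^{N} f_{ij}^2$. -/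
import Mathlib
open Finset

private lemma aux_sq3 (c1 c2 c3 C u v w : ℝ) (h1 : |c1| ≤ C) (h2 : |c2| ≤ C)
    (h3 : |c3| ≤ C) :
    (c1*u + c2*v + c3*w)^2 ≤ 3*C^2*(u^2+v^2+w^2) := by
  obtain ⟨h1a, h1b⟩ := abs_le.mp h1
  obtain ⟨h2a, h2b⟩ := abs_le.mp h2
  obtain ⟨h3a, h3b⟩ := abs_le.mp h3
  have e1 : c1^2 ≤ C^2 := sq_le_sq' h1a h1b
  have e2 : c2^2 ≤ C^2 := sq_le_sq' h2a h2b
  have e3 : c3^2 ≤ C^2 := sq_le_sq' h3a h3b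
  nlinarith [sq_nonneg (c1*u - c2*v), sq_nonneg (c1*u - c3*w), sq_nonneg (c2*v - c3*w),
    mul_le_mul_of_nonneg_right e1 (sq_nonneg u),
    mul_le_mul_of_nonneg_right e2 (sq_nonneg v),
    mul_le_mul_of_nonneg_right e3 (sq_nonneg w)]

private lemma aux_id (xi x0 yj y0 ai a0 bj b0 : ℝ) (hx0 : x0 ≠ 0) (hy0 : y0 ≠ 0) :
    xi*yj - ai*bj = (yj/y0)*(xi*y0 - ai*b0) + (ai*b0/(x0*y0))*(x0*yj - a0*bj)
      + (-(ai*bj/(x0*y0)))*(x0*y0 - a0*b0) := by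
  field_simp
  ring

/-- The squared Frobenius norm `‖x yᵀ - a bᵀ‖² = ∑ᵢⱼ fᵢⱼ²` of the rank-one
factorization residual matrix is two-sidedly comparable, uniformly over a
compact subset `K` of the positive reals, to the sum of the squared residuals
in the first row and first column.
(Index `0` plays the role of index `1` in the paper.) -/
theorem rank_one_residual_norm_equivalence (M N : ℕ) (hM : 2 ≤ M) (hN : 2 ≤ N)
    (K : Set ℝ) (hK : IsCompact K) (hKpos : K ⊆ {t : ℝ | 0 < t})
    (a : Fin M → ℝ) (b : Fin N → ℝ) (ha : ∀ i, 0 < a i) (hb : ∀ j, 0 < b j) :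
    ∃ c₁ > (0 : ℝ), ∃ c₂ > (0 : ℝ),
      ∀ x : Fin M → ℝ, ∀ y : Fin N → ℝ,
      (∀ i, x i ∈ K) → (∀ j, y j ∈ K) →
      (c₁ * ((∑ i ∈ Finset.univ.erase (⟨0, by omega⟩ : Fin M),
                (x i * y ⟨0, by omega⟩ - a i * b ⟨0, by omega⟩) ^ 2)
          + (∑ j ∈ Finset.univ.erase (⟨0, by omega⟩ : Fin N),
                (x ⟨0, by omega⟩ * y j - a ⟨0, by omega⟩ * b j) ^ 2)
          + (x ⟨0, by omega⟩ * y ⟨0, by omega⟩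
              - a ⟨0, by omega⟩ * b ⟨0, by omega⟩) ^ 2)
        ≤ ∑ i : Fin M, ∑ j : Fin N, (x i * y j - a i * b j) ^ 2) ∧
      (∑ i : Fin M, ∑ j : Fin N, (x i * y j - a i * b j) ^ 2
        ≤ c₂ * ((∑ i ∈ Finset.univ.erase (⟨0, by omega⟩ : Fin M),
                  (x i * y ⟨0, by omega⟩ - a i * b ⟨0, by omega⟩) ^ 2)
            + (∑ j ∈ Finset.univ.erase (⟨0, by omega⟩ : Fin N),
                  (x ⟨0, by omega⟩ * y j - a ⟨0, by omega⟩ * b j) ^ 2)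
            + (x ⟨0, by omega⟩ * y ⟨0, by omega⟩
                - a ⟨0, by omega⟩ * b ⟨0, by omega⟩) ^ 2)) := by
  -- uniform bounds on K via the compact set `insert 1 K`
  obtain ⟨m, hmK, hm⟩ := (hK.insert 1).exists_isLeast (Set.insert_nonempty 1 K)
  obtain ⟨B, hBK, hB⟩ := (hK.insert 1).exists_isGreatest (Set.insert_nonempty 1 K)
  have hmpos : (0:ℝ) < m := by
    rcases hmK with h | h
    · simp [h]
    · exact hKpos h
  have hB1 : (1:ℝ) ≤ B := hB (Set.mem_insert 1 K)
  set i0 : Fin M := ⟨0, by omega⟩ with hi0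
  set j0 : Fin N := ⟨0, by omega⟩ with hj0
  -- bounds on a and b
  set A : ℝ := ∑ i, |a i| with hA
  set Bb : ℝ := ∑ j, |b j| with hBb
  have haA : ∀ i, a i ≤ A := fun i => (le_abs_self _).trans
    (Finset.single_le_sum (fun i _ => abs_nonneg (a i)) (mem_univ i))
  have hbB : ∀ j, b j ≤ Bb := fun j => (le_abs_self _).trans
    (Finset.single_le_sum (fun j _ => abs_nonneg (b j)) (mem_univ j))
  have hApos : 0 < A := lt_of_lt_of_le (ha i0) (haA i0)
  have hBbpos : 0 < Bb := lt_of_lt_of_le (hb j0) (hbB j0)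
  set C : ℝ := max (B/m) (A * Bb / (m*m)) with hC
  have hCpos : 0 < C := lt_of_lt_of_le (div_pos (by linarith) hmpos) (le_max_left _ _)
  refine ⟨1, one_pos, 3*C^2*((N:ℝ) + (M:ℝ) + (M:ℝ)*(N:ℝ)), by positivity,
    fun x y hx hy => ?_⟩
  have hxm : ∀ i, m ≤ x i := fun i => hm (Set.mem_insert_of_mem 1 (hx i))
  have hxB : ∀ i, x i ≤ B := fun i => hB (Set.mem_insert_of_mem 1 (hx i))
  have hym : ∀ j, m ≤ y j := fun j => hm (Set.mem_insert_of_mem 1 (hy j))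
  have hyB : ∀ j, y j ≤ B := fun j => hB (Set.mem_insert_of_mem 1 (hy j))
  have hxpos : ∀ i, 0 < x i := fun i => lt_of_lt_of_le hmpos (hxm i)
  have hypos : ∀ j, 0 < y j := fun j => lt_of_lt_of_le hmpos (hym j)
  set S1 : ℝ := ∑ i ∈ Finset.univ.erase i0, (x i * y j0 - a i * b j0) ^ 2 with hS1
  set S2 : ℝ := ∑ j ∈ Finset.univ.erase j0, (x i0 * y j - a i0 * b j) ^ 2 with hS2
  set r : ℝ := (x i0 * y j0 - a i0 * b j0) ^ 2 with hr
  have hS1nn : 0 ≤ S1 := Finset.sum_nonneg fun _ _ => sq_nonneg _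
  have hS2nn : 0 ≤ S2 := Finset.sum_nonneg fun _ _ => sq_nonneg _
  have hrnn : 0 ≤ r := sq_nonneg _
  -- column and row sums
  have hP : ∑ i, (x i * y j0 - a i * b j0) ^ 2 = S1 + r :=
    (Finset.sum_erase_add univ _ (mem_univ i0)).symm
  have hQ : ∑ j, (x i0 * y j - a i0 * b j) ^ 2 = S2 + r :=
    (Finset.sum_erase_add univ _ (mem_univ j0)).symm
  constructor
  · -- lower bound, c₁ = 1
    rw [one_mul]
    have hsplit : ∀ i, ∑ j, (x i * y j - a i * b j) ^ 2
        = (x i * y j0 - a i * b j0) ^ 2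
          + ∑ j ∈ Finset.univ.erase j0, (x i * y j - a i * b j) ^ 2 :=
      fun i => (Finset.add_sum_erase univ _ (mem_univ j0)).symm
    have htot : ∑ i, ∑ j, (x i * y j - a i * b j) ^ 2
        = (S1 + r) + ∑ i, ∑ j ∈ Finset.univ.erase j0, (x i * y j - a i * b j) ^ 2 := by
      rw [← hP]
      rw [Finset.sum_congr rfl fun i _ => hsplit i, Finset.sum_add_distrib]
    have hge : S2 ≤ ∑ i, ∑ j ∈ Finset.univ.erase j0, (x i * y j - a i * b j) ^ 2 :=
      Finset.single_le_sum
        (f := fun i => ∑ j ∈ Finset.univ.erase j0, (x i * y j - a i * b j) ^ 2)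
        (fun i _ => Finset.sum_nonneg fun _ _ => sq_nonneg _) (mem_univ i0)
    rw [htot]
    linarith
  · -- upper bound
    have hpt : ∀ i j, (x i * y j - a i * b j) ^ 2
        ≤ 3*C^2*((x i * y j0 - a i * b j0)^2 + (x i0 * y j - a i0 * b j)^2 + r) := by
      intro i j
      have hxy0 : m*m ≤ x i0 * y j0 :=
        mul_le_mul (hxm i0) (hym j0) hmpos.le (hxpos i0).le
      have hxy0pos : 0 < x i0 * y j0 := mul_pos (hxpos i0) (hypos j0)
      have hc1 : |y j / y j0| ≤ C := by
        rw [abs_of_nonneg (div_nonneg (hypos j).le (hypos j0).le)]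
        exact le_trans (div_le_div₀ (by linarith) (hyB j) hmpos (hym j0)) (le_max_left _ _)
      have hc2 : |a i * b j0 / (x i0 * y j0)| ≤ C := by
        rw [abs_of_nonneg (div_nonneg (mul_pos (ha i) (hb j0)).le hxy0pos.le)]
        refine le_trans (div_le_div₀ (by positivity)
          (mul_le_mul (haA i) (hbB j0) (hb j0).le hApos.le)
          (by positivity) hxy0) (le_max_right _ _)
      have hc3 : |-(a i * b j / (x i0 * y j0))| ≤ C := by
        rw [abs_neg, abs_of_nonneg (div_nonneg (mul_pos (ha i) (hb j)).le hxy0pos.le)]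
        refine le_trans (div_le_div₀ (by positivity)
          (mul_le_mul (haA i) (hbB j) (hb j).le hApos.le)
          (by positivity) hxy0) (le_max_right _ _)
      have hid := aux_id (x i) (x i0) (y j) (y j0) (a i) (a i0) (b j) (b j0)
        (hxpos i0).ne' (hypos j0).ne'
      rw [hr, hid]
      exact aux_sq3 _ _ _ C _ _ _ hc1 hc2 hc3
    have hsum1 : ∑ i, ∑ j, (x i * y j - a i * b j) ^ 2
        ≤ ∑ i : Fin M, ∑ j : Fin N,
            3*C^2*((x i * y j0 - a i * b j0)^2 + (x i0 * y j - a i0 * b j)^2 + r) :=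
      Finset.sum_le_sum fun i _ => Finset.sum_le_sum fun j _ => hpt i j
    have hsum2 : ∑ i : Fin M, ∑ j : Fin N,
          3*C^2*((x i * y j0 - a i * b j0)^2 + (x i0 * y j - a i0 * b j)^2 + r)
        = 3*C^2*((N:ℝ)*(S1 + r) + (M:ℝ)*(S2 + r) + (M:ℝ)*(N:ℝ)*r) := by
      simp only [mul_add, Finset.sum_add_distrib, Finset.sum_const, Finset.card_univ,
        Fintype.card_fin, nsmul_eq_mul, ← Finset.mul_sum]
      rw [hP, hQ]
      ring
    have hfin : 3*C^2*((N:ℝ)*(S1 + r) + (M:ℝ)*(S2 + r) + (M:ℝ)*(N:ℝ)*r)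
        ≤ 3*C^2*((N:ℝ) + (M:ℝ) + (M:ℝ)*(N:ℝ)) * (S1 + S2 + r) := by
      have hNn : (0:ℝ) ≤ (N:ℝ) := Nat.cast_nonneg N
      have hMn : (0:ℝ) ≤ (M:ℝ) := Nat.cast_nonneg M
      have h1 : (N:ℝ)*(S1 + r) ≤ (N:ℝ)*(S1 + S2 + r) :=
        mul_le_mul_of_nonneg_left (by linarith) hNn
      have h2 : (M:ℝ)*(S2 + r) ≤ (M:ℝ)*(S1 + S2 + r) :=
        mul_le_mul_of_nonneg_left (by linarith) hMn
      have h3 : (M:ℝ)*(N:ℝ)*r ≤ (M:ℝ)*(N:ℝ)*(S1 + S2 + r) :=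
        mul_le_mul_of_nonneg_left (by linarith) (by positivity)
      have hCsq : (0:ℝ) ≤ 3*C^2 := by positivity
      calc 3*C^2*((N:ℝ)*(S1 + r) + (M:ℝ)*(S2 + r) + (M:ℝ)*(N:ℝ)*r)
          ≤ 3*C^2*((N:ℝ)*(S1+S2+r) + (M:ℝ)*(S1+S2+r) + (M:ℝ)*(N:ℝ)*(S1+S2+r)) :=
            mul_le_mul_of_nonneg_left (by linarith) hCsq
        _ = 3*C^2*((N:ℝ) + (M:ℝ) + (M:ℝ)*(N:ℝ)) * (S1 + S2 + r) := by ring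
    calc ∑ i, ∑ j, (x i * y j - a i * b j) ^ 2
        ≤ 3*C^2*((N:ℝ)*(S1 + r) + (M:ℝ)*(S2 + r) + (M:ℝ)*(N:ℝ)*r) := by
          rw [← hsum2]; exact hsum1
      _ ≤ 3*C^2*((N:ℝ) + (M:ℝ) + (M:ℝ)*(N:ℝ)) * (S1 + S2 + r) := hfin
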